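/- arXiv:1908.06051 — 2 statements merged into one kernel-verified Lean document; each statement's English description precedes it below -/
import Mathlib

section
/- Any coprime labeling of the stacked triangular prism Y_{3,n} = C_3 □ P_n has largest label at least 4n − 1, and a coprime labeling with largest label exactly 4n − 1 exists; hence the minimum coprime number of Y_{3,n} is 4n − 1. -/
/-- The stacked prism `Y_{m,n} = C_m □ P_n`: vertices `(i, j)` with `i : Fin n`
(path coordinate) and `j : ZMod m` (cycle coordinate); edges `(i,j)(i+1,j)`
along the path and `(i,j)(i,j+1)` around each cycle. -/
def stackedPrism (m n : ℕ) : SimpleGraph (Fin n × ZMod m) :=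
  SimpleGraph.fromRel (fun x y =>
    (x.2 = y.2 ∧ (y.1 : ℕ) = (x.1 : ℕ) + 1) ∨
    (x.1 = y.1 ∧ y.2 = x.2 + 1))

/-- A finset of vertices is independent if no two of its members are adjacent. -/
def IsIndepFinset {V : Type*} (G : SimpleGraph V) (s : Finset V) : Prop :=
  ∀ x ∈ s, ∀ y ∈ s, ¬ G.Adj x y


/-!
With all labels at most `4n - 2` there are at most `2n - 1` odd labels, and the even labels form
an independent set, which meets each triangle at most once and so has at most `n` elements:
that leaves `3n - 1` labels for `3n` vertices.

For the construction, layer `i` gets the odd labels `4i + 1`, `4i + 3` and one even label at most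
`4i + 2`, arranged so that the pattern repeats every 15 layers with all labels shifted by 60.
Adjacent labels `a ≤ b` are then coprime as soon as `a` is coprime to `b - a` and every prime
factor of `b - a` divides 60, so coprimality reduces to a finite check on one period.
-/

open Finset

theorem Nat.coprime_mul_add_of_sub_dvd_pow {N a b k : ℕ} (hab : a ≤ b) (hdvd : b - a ∣ N ^ k)
    (hcop : a.Coprime (b - a)) (m : ℕ) : (N * m + a).Coprime (N * m + b) := by
  rw [show N * m + b = N * m + a + (b - a) by omega, Nat.coprime_self_add_right]
  refine Nat.coprime_of_dvd fun p hp hpx hpd => ?_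
  have hpN : p ∣ N := hp.dvd_of_dvd_pow (hpd.trans hdvd)
  have hpa : p ∣ a := (Nat.dvd_add_right (hpN.mul_right m)).mp hpx
  exact hp.not_dvd_one (hcop.gcd_eq_one ▸ Nat.dvd_gcd hpa hpd)

theorem isIndepFinset_filter_even {V : Type*} [Fintype V] {G : SimpleGraph V} {f : V → ℕ}
    (hf : ∀ x y, G.Adj x y → (f x).Coprime (f y)) :
    IsIndepFinset G (univ.filter fun x => Even (f x)) := by
  intro x hx y hy hxy
  simp only [mem_filter, mem_univ, true_and, even_iff_two_dvd] at hx hy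
  exact Nat.not_coprime_of_dvd_of_dvd one_lt_two hx hy (hf x y hxy)

theorem card_filter_odd_le {V : Type*} {s : Finset V} {f : V → ℕ} (hf : Set.InjOn f s) {M : ℕ}
    (hM : ∀ x ∈ s, f x ≤ M) : (s.filter fun x => Odd (f x)).card ≤ (M + 1) / 2 := by
  refine (card_le_card_of_injOn (t := range ((M + 1) / 2)) (fun x => f x / 2)
    (fun x hx => ?_) fun x hx y hy hxy => ?_).trans_eq (card_range _)
  · simp only [mem_coe, mem_filter] at hx
    obtain ⟨k, hk⟩ := hx.2
    have := hM x hx.1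
    simp only [mem_coe, mem_range]
    omega
  · simp only [mem_coe, mem_filter] at hx hy
    obtain ⟨k, hk⟩ := hx.2
    obtain ⟨l, hl⟩ := hy.2
    exact hf hx.1 hy.1 (by simp only at hxy; omega)

theorem stackedPrism_three_adj_of_fst_eq {n : ℕ} {x y : Fin n × ZMod 3} (hne : x ≠ y)
    (h : x.1 = y.1) : (stackedPrism 3 n).Adj x y := by
  have hcycle : ∀ a b : ZMod 3, a ≠ b → b = a + 1 ∨ a = b + 1 := by decide
  have := hcycle x.2 y.2 fun h2 => hne (Prod.ext h h2)
  rw [stackedPrism, SimpleGraph.fromRel_adj]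
  exact ⟨hne, by tauto⟩

theorem IsIndepFinset.card_le_of_stackedPrism_three {n : ℕ} {s : Finset (Fin n × ZMod 3)}
    (hs : IsIndepFinset (stackedPrism 3 n) s) : s.card ≤ n := by
  simpa using card_le_card_of_injOn Prod.fst (fun x _ => mem_univ x.1) fun x hx y hy hxy =>
    by_contra fun hne => hs x hx y hy (stackedPrism_three_adj_of_fst_eq hne hxy)

theorem stackedPrism_three_exists_label_ge {n : ℕ} (hn : 1 ≤ n) {f : Fin n × ZMod 3 → ℕ}
    (hinj : Function.Injective f)
    (hf : ∀ x y, (stackedPrism 3 n).Adj x y → (f x).Coprime (f y)) :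
    ∃ x, 4 * n - 1 ≤ f x := by
  by_contra! hlt
  have heven := (isIndepFinset_filter_even hf).card_le_of_stackedPrism_three
  have hodd := card_filter_odd_le (s := univ) hinj.injOn (M := 4 * n - 2)
    fun x _ => by have := hlt x; omega
  have hsplit := card_filter_add_card_filter_not (s := univ) fun x => Even (f x)
  simp only [Nat.not_even_iff_odd, card_univ, Fintype.card_prod, Fintype.card_fin,
    ZMod.card] at hsplit
  omega

theorem coprime_of_stackedPrism_adj {m n : ℕ} {f : ℕ → ZMod m → ℕ}
    (hpath : ∀ i j, (f i j).Coprime (f (i + 1) j))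
    (hcycle : ∀ i j, (f i j).Coprime (f i (j + 1)))
    {x y : Fin n × ZMod m} (h : (stackedPrism m n).Adj x y) :
    (f x.1 x.2).Coprime (f y.1 y.2) := by
  obtain ⟨i, j⟩ := x
  obtain ⟨i', j'⟩ := y
  rw [stackedPrism, SimpleGraph.fromRel_adj] at h
  rcases h.2 with (⟨hj, hi⟩ | ⟨hi, hj⟩) | (⟨hj, hi⟩ | ⟨hi, hj⟩)
  · rw [hi, ← hj]; exact hpath _ _
  · rw [← hi, hj]; exact hcycle _ _
  · rw [hi, ← hj]; exact (hpath _ _).symm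
  · rw [← hi, hj]; exact (hcycle _ _).symm

def CoprimeShiftCert (N a b : ℕ) : Prop := a ≤ b ∧ b - a ∣ N ^ 2 ∧ a.Coprime (b - a)

instance (N a b : ℕ) : Decidable (CoprimeShiftCert N a b) :=
  inferInstanceAs (Decidable (_ ∧ _ ∧ _))

theorem coprime_of_coprimeShiftCert {N a b : ℕ}
    (h : CoprimeShiftCert N a b ∨ CoprimeShiftCert N b a) (m : ℕ) :
    (N * m + a).Coprime (N * m + b) := by
  rcases h with ⟨hab, hdvd, hcop⟩ | ⟨hba, hdvd, hcop⟩
  · exact Nat.coprime_mul_add_of_sub_dvd_pow hab hdvd hcop m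
  · exact (Nat.coprime_mul_add_of_sub_dvd_pow hba hdvd hcop m).symm

/-- Rows `0, …, 14` label one period of 15 layers; row 15 is row 0 shifted by 60, so that the
edges from the last layer of a period to the first layer of the next are checked with the rest. -/
def prismLabelTable : List (List ℕ) :=
  [[1, 3, 2], [5, 4, 7], [8, 9, 11], [13, 14, 15], [16, 17, 19], [21, 23, 22], [25, 26, 27],
   [29, 31, 28], [32, 35, 33], [37, 39, 34], [41, 38, 43], [44, 47, 45], [49, 51, 46],
   [52, 53, 55], [57, 58, 59], [61, 63, 62]]

def tableLabel (r : ℕ) (j : ZMod 3) : ℕ := (prismLabelTable.getD r []).getD j.val 0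

def prismLabel (i : ℕ) (j : ZMod 3) : ℕ := 60 * (i / 15) + tableLabel (i % 15) j

theorem tableLabel_fifteen : ∀ j, tableLabel 15 j = 60 + tableLabel 0 j := by decide

theorem tableLabel_bounds :
    ∀ r < 15, ∀ j, 1 ≤ tableLabel r j ∧ tableLabel r j ≤ 4 * r + 3 := by
  decide

theorem tableLabel_injOn : ∀ r < 15, ∀ r' < 15, ∀ j j',
    tableLabel r j = tableLabel r' j' → r = r' ∧ j = j' := by
  decide

theorem tableLabel_cert_cycle : ∀ r < 15, ∀ j,
    CoprimeShiftCert 60 (tableLabel r j) (tableLabel r (j + 1)) ∨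
      CoprimeShiftCert 60 (tableLabel r (j + 1)) (tableLabel r j) := by
  decide

theorem tableLabel_cert_path : ∀ r < 15, ∀ j,
    CoprimeShiftCert 60 (tableLabel r j) (tableLabel (r + 1) j) ∨
      CoprimeShiftCert 60 (tableLabel (r + 1) j) (tableLabel r j) := by
  decide

theorem prismLabel_succ (i : ℕ) (j : ZMod 3) :
    prismLabel (i + 1) j = 60 * (i / 15) + tableLabel (i % 15 + 1) j := by
  rcases Nat.lt_or_ge (i % 15) 14 with hr | hr
  · rw [prismLabel, show (i + 1) / 15 = i / 15 by omega, show (i + 1) % 15 = i % 15 + 1 by omega]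
  · rw [prismLabel, show (i + 1) / 15 = i / 15 + 1 by omega, show (i + 1) % 15 = 0 by omega,
      show i % 15 + 1 = 15 by omega, tableLabel_fifteen]
    ring

theorem prismLabel_bounds (i : ℕ) (j : ZMod 3) :
    1 ≤ prismLabel i j ∧ prismLabel i j ≤ 4 * i + 3 := by
  have := tableLabel_bounds (i % 15) (Nat.mod_lt _ (by norm_num)) j
  unfold prismLabel
  omega

theorem prismLabel_injective : Function.Injective fun x : ℕ × ZMod 3 => prismLabel x.1 x.2 := by
  rintro ⟨i, j⟩ ⟨i', j'⟩ h
  have hb := tableLabel_bounds (i % 15) (Nat.mod_lt _ (by norm_num)) j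
  have hb' := tableLabel_bounds (i' % 15) (Nat.mod_lt _ (by norm_num)) j'
  simp only [prismLabel] at h
  have hq : i / 15 = i' / 15 := by omega
  obtain ⟨hr, rfl⟩ := tableLabel_injOn (i % 15) (Nat.mod_lt _ (by norm_num)) (i' % 15)
    (Nat.mod_lt _ (by norm_num)) j j' (by omega)
  rw [Prod.mk.injEq]
  exact ⟨by omega, rfl⟩

theorem prismLabel_coprime_succ_fst (i : ℕ) (j : ZMod 3) :
    (prismLabel i j).Coprime (prismLabel (i + 1) j) := by
  rw [prismLabel_succ]
  exact coprime_of_coprimeShiftCert (tableLabel_cert_path _ (Nat.mod_lt _ (by norm_num)) j) _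

theorem prismLabel_coprime_succ_snd (i : ℕ) (j : ZMod 3) :
    (prismLabel i j).Coprime (prismLabel i (j + 1)) :=
  coprime_of_coprimeShiftCert (tableLabel_cert_cycle _ (Nat.mod_lt _ (by norm_num)) j) _

theorem stackedTriangularPrism_minCoprime (n : ℕ) (hn : 1 ≤ n) :
    (∀ f : Fin n × ZMod 3 → ℕ, Function.Injective f → (∀ x, 1 ≤ f x) →
      (∀ x y, (stackedPrism 3 n).Adj x y → Nat.Coprime (f x) (f y)) →
      ∃ x, 4 * n - 1 ≤ f x) ∧
    (∃ f : Fin n × ZMod 3 → ℕ, Function.Injective f ∧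
      (∀ x, f x ∈ Finset.Icc 1 (4 * n - 1)) ∧
      (∀ x y, (stackedPrism 3 n).Adj x y → Nat.Coprime (f x) (f y))) := by
  refine ⟨fun f hinj _ hf => stackedPrism_three_exists_label_ge hn hinj hf,
    fun x => prismLabel x.1 x.2, ?_, fun x => ?_,
    fun x y =>
      coprime_of_stackedPrism_adj prismLabel_coprime_succ_fst prismLabel_coprime_succ_snd⟩
  · exact prismLabel_injective.comp (Fin.val_injective.prodMap Function.injective_id)
  · have := x.1.isLt
    have := prismLabel_bounds x.1 x.2
    exact mem_Icc.mpr ⟨this.1, by simp only; omega⟩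
end

section
/- If k ≥ 2 is even, then the graph GP*(2k,k) does not admit a prime labeling; equivalently, its independence number is strictly less than 2k. -/
/-- The generalized Petersen graph `GP(n,k)`: outer cycle `v` (inl) with edges
`v_i v_{i+1}`, inner vertices `u` (inr) with edges `u_i u_{i+k}` (indices mod `n`),
and spokes `v_i u_i`. -/
def genPetersen (n k : ℕ) : SimpleGraph (ZMod n ⊕ ZMod n) :=
  SimpleGraph.fromRel (fun x y =>
    (∃ i : ZMod n, x = Sum.inl i ∧ y = Sum.inl (i + 1)) ∨
    (∃ i : ZMod n, x = Sum.inr i ∧ y = Sum.inr (i + (k : ZMod n))) ∨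
    (∃ i : ZMod n, x = Sum.inl i ∧ y = Sum.inr i))

/-! If `s` is independent with `2k` vertices it holds exactly one of `v_i, u_i` for every `i`, so
`v_i ∈ s` forces `v_{i+1} ∉ s`, `u_{i+1} ∈ s`, `u_{i+1+k} ∉ s`, `v_{i+1+k} ∈ s`. Iterating this
step `k + 1` times moves `v_i` by `(k + 1)² ≡ 1 (mod 2k)` for even `k`, giving the adjacent pair
`v_i, v_{i+1}` in `s`. A prime labeling would make the `2k` even labels such an independent set. -/

open Finset

theorem Finset.inl_mem_or_inr_mem_of_card_le {α : Type*} [Fintype α] [DecidableEq α]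
    {s : Finset (α ⊕ α)}
    (hs : ∀ i, Sum.inl i ∈ s → Sum.inr i ∉ s) (hcard : Fintype.card α ≤ #s) (i : α) :
    Sum.inl i ∈ s ∨ Sum.inr i ∈ s := by
  have hdisj : Disjoint s.toLeft s.toRight :=
    disjoint_left.2 fun j hl hr => hs j (mem_toLeft.1 hl) (mem_toRight.1 hr)
  have huniv : s.toLeft ∪ s.toRight = univ := by
    refine eq_univ_of_card _ (le_antisymm (card_le_univ _) ?_)
    rwa [card_union_of_disjoint hdisj, card_toLeft_add_card_toRight]
  simpa using (huniv.symm ▸ mem_univ i : i ∈ s.toLeft ∪ s.toRight)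

theorem exists_and_add_of_forall_or_add {M : Type*} [AddCommMonoid M] {p : M → Prop}
    {c d : M} {j : ℕ} (hj : j • (c + d) = d) (hp : ∀ i, p i ∨ p (i + c)) :
    ∃ i, p i ∧ p (i + d) := by
  by_contra! hcons
  -- `p i → ¬ p (i + d) → p (i + d + c)`: membership propagates by steps of `c + d`.
  have hstep (i : M) (hi : p i) : p (i + (c + d)) := by
    simpa [add_assoc, add_comm c] using (hp (i + d)).resolve_left (hcons i hi)
  have hiter (n : ℕ) (i : M) (hi : p i) : p (i + n • (c + d)) := by
    induction n generalizing i with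
    | zero => simpa using hi
    | succ n ih =>
      rw [succ_nsmul, add_comm (n • _), ← add_assoc]
      exact ih _ (hstep i hi)
  obtain ⟨i, hi⟩ : ∃ i, p i := (hp 0).elim (fun h => ⟨0, h⟩) (fun h => ⟨0 + c, h⟩)
  exact hcons i hi (hj ▸ hiter j i hi)

theorem ZMod.natCast_add_one_sq_of_even {k : ℕ} (hk : Even k) :
    ((k : ZMod (2 * k)) + 1) ^ 2 = 1 := by
  obtain ⟨m, rfl⟩ := hk
  have h : ((2 * (m + m) : ℕ) : ZMod (2 * (m + m))) = 0 := ZMod.natCast_self _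
  push_cast at h ⊢
  linear_combination ((m : ZMod (2 * (m + m))) + 1) * h

section genPetersen

variable {n k : ℕ}

theorem genPetersen_adj_inl_add_one (hn : n ≠ 1) (i : ZMod n) :
    (genPetersen n k).Adj (Sum.inl i) (Sum.inl (i + 1)) := by
  have : Nontrivial (ZMod n) := ZMod.nontrivial_iff.2 hn
  simp [genPetersen]

theorem genPetersen_adj_inr_add (hk : (k : ZMod n) ≠ 0) (i : ZMod n) :
    (genPetersen n k).Adj (Sum.inr i) (Sum.inr (i + k)) := by
  simp [genPetersen, hk]

theorem genPetersen_adj_inl_inr (i : ZMod n) :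
    (genPetersen n k).Adj (Sum.inl i) (Sum.inr i) := by
  simp [genPetersen]

end genPetersen

theorem genPetersen_card_lt_of_isIndepFinset {k : ℕ} (hk : k ≠ 0) (heven : Even k)
    {s : Finset (ZMod (2 * k) ⊕ ZMod (2 * k))} (hs : IsIndepFinset (genPetersen (2 * k) k) s) :
    #s < 2 * k := by
  have : NeZero (2 * k) := ⟨by omega⟩
  by_contra! hcard
  have hk0 : (k : ZMod (2 * k)) ≠ 0 := by
    rw [ne_eq, ZMod.natCast_eq_zero_iff]
    exact Nat.not_dvd_of_pos_of_lt (by omega) (by omega)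
  have hcover := Finset.inl_mem_or_inr_mem_of_card_le
    (fun i hl hr => hs _ hl _ hr (genPetersen_adj_inl_inr i)) (by rwa [ZMod.card])
  have hp (i : ZMod (2 * k)) : Sum.inl i ∈ s ∨ Sum.inl (i + k) ∈ s :=
    or_iff_not_imp_left.2 fun hl => (hcover (i + k)).resolve_right fun hr =>
      hs _ ((hcover i).resolve_left hl) _ hr (genPetersen_adj_inr_add hk0 i)
  have hj : (k + 1) • ((k : ZMod (2 * k)) + 1) = 1 := by
    rw [nsmul_eq_mul, Nat.cast_add_one, ← sq, ZMod.natCast_add_one_sq_of_even heven]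
  obtain ⟨i, hi, hi1⟩ := exists_and_add_of_forall_or_add hj hp
  exact hs _ hi _ hi1 (genPetersen_adj_inl_add_one (by omega) i)

theorem isIndepFinset_filter_dvd {V : Type*} [Fintype V] {G : SimpleGraph V} {f : V → ℕ}
    {p : ℕ} (hp : p ≠ 1) (hf : ∀ x y, G.Adj x y → Nat.Coprime (f x) (f y)) :
    IsIndepFinset G {x | p ∣ f x} := by
  intro x hx y hy hxy
  simp only [mem_filter, mem_univ, true_and] at hx hy
  exact hp (Nat.eq_one_of_dvd_coprimes (hf x y hxy) hx hy)

theorem card_filter_dvd_of_injective_of_mem_Icc {V : Type*} [Fintype V] {f : V → ℕ} {n : ℕ}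
    (hf : Function.Injective f) (hrange : ∀ x, f x ∈ Icc 1 n) (hcard : Fintype.card V = n)
    (p : ℕ) : #{x | p ∣ f x} = n / p := by
  have himage : univ.image f = Icc 1 n :=
    eq_of_subset_of_card_le (by simpa [subset_iff] using hrange)
      (by rw [card_image_of_injective _ hf, card_univ, hcard, Nat.card_Icc]; omega)
  calc #{x | p ∣ f x} = #(({x | p ∣ f x} : Finset V).image f) :=
        (card_image_of_injective _ hf).symm
    _ = #{y ∈ Ioc 0 n | p ∣ y} := by rw [← filter_image, himage]; rfl
    _ = n / p := Nat.Ioc_filter_dvd_card_eq_div n p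

/-- For `n = 2k`, `GP*(2k,k)` is the graph `genPetersen (2k) k`: each inner vertex
`u_i` has degree 2 and the inner vertices form `k` disjoint edges. -/
theorem gpStar_even_not_prime (k : ℕ) (hk : 2 ≤ k) (heven : Even k) :
    (¬ ∃ f : ZMod (2 * k) ⊕ ZMod (2 * k) → ℕ, Function.Injective f ∧
        (∀ x, f x ∈ Finset.Icc 1 (4 * k)) ∧
        (∀ x y, (genPetersen (2 * k) k).Adj x y → Nat.Coprime (f x) (f y))) ∧
    (∀ s : Finset (ZMod (2 * k) ⊕ ZMod (2 * k)),
      IsIndepFinset (genPetersen (2 * k) k) s → s.card < 2 * k) := by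
  have : NeZero (2 * k) := ⟨by omega⟩
  refine ⟨?_, fun s => genPetersen_card_lt_of_isIndepFinset (by omega) heven⟩
  rintro ⟨f, hf, hrange, hcop⟩
  have hcard : #{x | 2 ∣ f x} = 2 * k := by
    rw [card_filter_dvd_of_injective_of_mem_Icc hf hrange (by simp [ZMod.card]; omega)]
    omega
  exact (genPetersen_card_lt_of_isIndepFinset (by omega) heven
    (isIndepFinset_filter_dvd (by norm_num) hcop)).ne hcard
end
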